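/- Let R = 𝔽₂ + u𝔽₂ (u² = 0), realized as DualNumber (ZMod 2). Let G be a finite group of odd order p, let v₁, v₂ ∈ R[G] and γ₁, γ₂, γ₃, γ₄ ∈ R. Let A be the (p+1)×(p+1) matrix over R, indexed by Option G, whose (none,none) entry is γ₁, whose other entries in the first row and first column are γ₂, and whose (some g, some h) entry is σ(v₁)(g,h); let B be defined analogously from γ₃, γ₄ and v₂, and let M be the 2(p+1)×2(p+1) block matrix with block rows (A, B) and (Bᵀ, Aᵀ). Suppose: (1) v₁v₂ = v₂v₁; (2) γ₁² + γ₂² + γ₃² + γ₄² = 1; (3) v₁v₁* + v₂v₂* + (γ₂+γ₄)²·ĝ + 1 = 0; (4) v₁*v₁ + v₂*v₂ + (γ₂+γ₄)²·ĝ + 1 = 0; (5) γ₁ equals the sum of the coefficients of v₁ and γ₃ equals the sum of the coefficients of v₂. Then the linear code C_σ of length 4p+4 over R spanned by the rows of [I_{2p+2} | M] is self-dual, i.e. C_σ = C_σ⊥. -/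

import Mathlib

open Matrix

/-- `σ(v)`: the `G × G` matrix whose `(g,h)` entry is the coefficient of `v` at `g⁻¹h`. -/
noncomputable def sigmaMat {R : Type*} [CommRing R] {G : Type*} [Group G] [Fintype G]
    (v : MonoidAlgebra R G) : Matrix G G R :=
  Matrix.of fun g h => v.coeff (g⁻¹ * h)

/-- The canonical involution `v* = ∑ α_g g⁻¹`. -/
noncomputable def grInvol {R : Type*} [CommRing R] {G : Type*} [Group G]
    (v : MonoidAlgebra R G) : MonoidAlgebra R G :=
  MonoidAlgebra.ofCoeff (Finsupp.equivMapDomain (Equiv.inv G) v.coeff)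

/-- `ĝ = ∑_{g ∈ G} g` in the group algebra. -/
noncomputable def ghat (R : Type*) [CommRing R] (G : Type*) [Group G] [Fintype G] :
    MonoidAlgebra R G :=
  ∑ g : G, MonoidAlgebra.of R G g

/-- The dual of a linear code `C ⊆ Rⁿ` with respect to the form `∑ᵢ vᵢ wᵢ`. -/
def dualCode {R : Type*} [CommRing R] {ι : Type*} [Fintype ι]
    (C : Submodule R (ι → R)) : Submodule R (ι → R) where
  carrier := {w | ∀ v ∈ C, ∑ i, v i * w i = 0}
  zero_mem' := by intro v _; simp
  add_mem' := by
    intro a b ha hb v hv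
    have h1 := ha v hv
    have h2 := hb v hv
    simp only [Pi.add_apply, mul_add, Finset.sum_add_distrib, h1, h2, add_zero]
  smul_mem' := by
    intro c w hw v hv
    have h := hw v hv
    have : ∑ i, v i * (c • w) i = c * ∑ i, v i * w i := by
      rw [Finset.mul_sum]
      exact Finset.sum_congr rfl fun i _ => by
        simp [smul_eq_mul, mul_left_comm]
    simp only [Set.mem_setOf_eq] at *
    simpa [h] using this


set_option linter.unusedSectionVars false

section aux
variable {S : Type*} [CommRing S] {G : Type*} [Group G] [Fintype G] [DecidableEq G]

lemma mul_apply_univ (f g : MonoidAlgebra S G) (x : G) :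
    (f * g).coeff x = ∑ a : G, f.coeff a * g.coeff (a⁻¹ * x) := by
  rw [MonoidAlgebra.coeff_mul_apply_left, Finsupp.sum_fintype]
  intro a; simp

lemma grInvol_apply (v : MonoidAlgebra S G) (x : G) : (grInvol v).coeff x = v.coeff x⁻¹ := by
  simp [grInvol, Finsupp.equivMapDomain_apply]

lemma ghat_apply (x : G) : (ghat S G).coeff x = 1 := by
  classical
  rw [ghat, MonoidAlgebra.coeff_sum]
  simp only [MonoidAlgebra.of_apply]
  rw [Finsupp.finset_sum_apply]
  simp [Finsupp.single_apply]

lemma sum_shiftL (f : G → S) (g : G) : ∑ k : G, f (g⁻¹ * k) = ∑ a : G, f a :=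
  Fintype.sum_equiv (Equiv.mulLeft g⁻¹) _ _ fun _ => rfl

lemma sum_shiftR (f : G → S) (h : G) : ∑ k : G, f (k⁻¹ * h) = ∑ a : G, f a :=
  Fintype.sum_equiv ((Equiv.inv G).trans (Equiv.mulRight h)) _ _ fun _ => rfl

lemma E1 (v w : MonoidAlgebra S G) (g h : G) :
    ∑ k : G, v.coeff (g⁻¹ * k) * w.coeff (h⁻¹ * k) = (v * grInvol w).coeff (g⁻¹ * h) := by
  rw [mul_apply_univ]
  refine Fintype.sum_equiv (Equiv.mulLeft g⁻¹) _ _ fun k => ?_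
  rw [grInvol_apply]
  show v.coeff (g⁻¹ * k) * w.coeff (h⁻¹ * k) = v.coeff (g⁻¹ * k) * w.coeff (((g⁻¹ * k)⁻¹ * (g⁻¹ * h))⁻¹)
  congr 2
  group

lemma E2 (v w : MonoidAlgebra S G) (g h : G) :
    ∑ k : G, v.coeff (k⁻¹ * g) * w.coeff (k⁻¹ * h) = (grInvol v * w).coeff (g⁻¹ * h) := by
  rw [mul_apply_univ]
  refine Fintype.sum_equiv (Equiv.mulLeft g⁻¹) _ _ fun k => ?_
  rw [grInvol_apply]
  show v.coeff (k⁻¹ * g) * w.coeff (k⁻¹ * h) = v.coeff ((g⁻¹ * k)⁻¹) * w.coeff ((g⁻¹ * k)⁻¹ * (g⁻¹ * h))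
  congr 2
  · group
  · group

lemma E3 (v w : MonoidAlgebra S G) (g h : G) :
    ∑ k : G, v.coeff (g⁻¹ * k) * w.coeff (k⁻¹ * h) = (v * w).coeff (g⁻¹ * h) := by
  rw [mul_apply_univ]
  refine Fintype.sum_equiv (Equiv.mulLeft g⁻¹) _ _ fun k => ?_
  show v.coeff (g⁻¹ * k) * w.coeff (k⁻¹ * h) = v.coeff (g⁻¹ * k) * w.coeff ((g⁻¹ * k)⁻¹ * (g⁻¹ * h))
  congr 2
  group

end aux

lemma two_zero : (2 : DualNumber (ZMod 2)) = 0 := by ext <;> decide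

lemma addself (x : DualNumber (ZMod 2)) : x + x = 0 := by
  have h : x + x = 2 * x := by ring
  rw [h, two_zero, zero_mul]

lemma eq_of_addzero {a b : DualNumber (ZMod 2)} (h : a + b = 0) : a = b := by
  have hb := addself b
  linear_combination h - hb

lemma mem_dualCode {R : Type*} [CommRing R] {ι : Type*} [Fintype ι]
    {C : Submodule R (ι → R)} {w : ι → R} :
    w ∈ dualCode C ↔ ∀ v ∈ C, ∑ i, v i * w i = 0 := Iff.rfl

set_option maxHeartbeats 1000000 in
theorem stmt2 {G : Type*} [Group G] [Fintype G] [DecidableEq G]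
    (hodd : Odd (Fintype.card G))
    (v₁ v₂ : MonoidAlgebra (DualNumber (ZMod 2)) G) (γ₁ γ₂ γ₃ γ₄ : DualNumber (ZMod 2))
    (A B : Matrix (Option G) (Option G) (DualNumber (ZMod 2)))
    (hA : A = Matrix.of fun i j => match i, j with
      | none, none => γ₁
      | none, some _ => γ₂
      | some _, none => γ₂
      | some g, some h => sigmaMat v₁ g h)
    (hB : B = Matrix.of fun i j => match i, j with
      | none, none => γ₃
      | none, some _ => γ₄
      | some _, none => γ₄
      | some g, some h => sigmaMat v₂ g h)
    (M : Matrix (Option G ⊕ Option G) (Option G ⊕ Option G) (DualNumber (ZMod 2)))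
    (hM : M = Matrix.fromBlocks A B Bᵀ Aᵀ)
    (h1 : v₁ * v₂ = v₂ * v₁)
    (h2 : γ₁ ^ 2 + γ₂ ^ 2 + γ₃ ^ 2 + γ₄ ^ 2 = 1)
    (h3 : v₁ * grInvol v₁ + v₂ * grInvol v₂ + (γ₂ + γ₄) ^ 2 • ghat (DualNumber (ZMod 2)) G + 1 = 0)
    (h4 : grInvol v₁ * v₁ + grInvol v₂ * v₂ + (γ₂ + γ₄) ^ 2 • ghat (DualNumber (ZMod 2)) G + 1 = 0)
    (h5 : γ₁ = ∑ g : G, v₁.coeff g) (h5' : γ₃ = ∑ g : G, v₂.coeff g)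
    -- the rows of the generator matrix `[I | M]`
    (gen : (Option G ⊕ Option G) →
      ((Option G ⊕ Option G) ⊕ (Option G ⊕ Option G)) → DualNumber (ZMod 2))
    (hgen : gen = fun i => Sum.elim (fun j => if i = j then 1 else 0) (fun j => M i j))
    (Cσ : Submodule (DualNumber (ZMod 2)) (((Option G ⊕ Option G) ⊕ (Option G ⊕ Option G)) → DualNumber (ZMod 2)))
    (hC : Cσ = Submodule.span (DualNumber (ZMod 2)) (Set.range gen)) :
    Cσ = dualCode Cσ := by
  classical
  have hcard : ∀ x : DualNumber (ZMod 2), (∑ _k : G, x) = x := by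
    intro x
    obtain ⟨m, hm⟩ := hodd
    have h2m : (2 * m) • x = 0 := by
      rw [mul_comm, mul_nsmul, two_nsmul (m • x), addself]
    rw [Finset.sum_const, Finset.card_univ, hm, add_smul, one_smul, h2m, zero_add]
  have addap : ∀ (f g : MonoidAlgebra (DualNumber (ZMod 2)) G) (y : G),
      (f + g).coeff y = f.coeff y + g.coeff y := fun _ _ _ => rfl
  have smulap : ∀ (c : DualNumber (ZMod 2)) (f : MonoidAlgebra (DualNumber (ZMod 2)) G) (y : G),
      (c • f).coeff y = c * f.coeff y := fun _ _ _ => rfl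
  have zeroap : ∀ y : G, (0 : MonoidAlgebra (DualNumber (ZMod 2)) G).coeff y = 0 := fun _ => rfl
  have oneap : ∀ y : G, (1 : MonoidAlgebra (DualNumber (ZMod 2)) G).coeff y
      = if 1 = y then 1 else 0 := fun y => by
    rw [MonoidAlgebra.one_def]; exact Finsupp.single_apply
  have hcoeff3 : ∀ x : G, (v₁ * grInvol v₁).coeff x + (v₂ * grInvol v₂).coeff x + (γ₂ + γ₄) ^ 2
      + (if (1 : G) = x then 1 else 0) = 0 := by
    intro x
    have hh : (v₁ * grInvol v₁ + v₂ * grInvol v₂ + (γ₂ + γ₄) ^ 2 • ghat (DualNumber (ZMod 2)) G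
        + 1).coeff x = (0 : MonoidAlgebra (DualNumber (ZMod 2)) G).coeff x := by rw [h3]
    rw [addap, addap, addap, smulap, ghat_apply, mul_one, oneap, zeroap] at hh
    exact hh
  have hcoeff4 : ∀ x : G, (grInvol v₁ * v₁).coeff x + (grInvol v₂ * v₂).coeff x + (γ₂ + γ₄) ^ 2
      + (if (1 : G) = x then 1 else 0) = 0 := by
    intro x
    have hh : (grInvol v₁ * v₁ + grInvol v₂ * v₂ + (γ₂ + γ₄) ^ 2 • ghat (DualNumber (ZMod 2)) G
        + 1).coeff x = (0 : MonoidAlgebra (DualNumber (ZMod 2)) G).coeff x := by rw [h4]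
    rw [addap, addap, addap, smulap, ghat_apply, mul_one, oneap, zeroap] at hh
    exact hh
  have hX1 : A * Aᵀ + B * Bᵀ = 1 := by
    rw [← Matrix.ext_iff]
    intro i j
    rw [Matrix.add_apply, Matrix.mul_apply, Matrix.mul_apply]
    rcases i with _ | g <;> rcases j with _ | h <;>
      simp only [Fintype.sum_option, Matrix.transpose_apply, hA, hB, Matrix.of_apply, sigmaMat]
    · rw [hcard, hcard, Matrix.one_apply_eq]
      linear_combination h2
    · rw [← Finset.mul_sum, ← Finset.mul_sum, sum_shiftL, sum_shiftL, ← h5, ← h5',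
        Matrix.one_apply_ne (by simp)]
      linear_combination addself (γ₁ * γ₂) + addself (γ₃ * γ₄)
    · rw [← Finset.sum_mul, ← Finset.sum_mul, sum_shiftL, sum_shiftL, ← h5, ← h5',
        Matrix.one_apply_ne (by simp)]
      linear_combination addself (γ₂ * γ₁) + addself (γ₄ * γ₃)
    · rw [E1, E1]
      by_cases hgh : g = h
      · subst hgh
        have hc := hcoeff3 1
        rw [if_pos rfl] at hc
        simp only [inv_mul_cancel, Matrix.one_apply_eq]
        linear_combination hc - addself (γ₂ * γ₄ + 1)
      · have hc := hcoeff3 (g⁻¹ * h)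
        rw [if_neg (by simp [eq_comm, inv_mul_eq_one, hgh])] at hc
        rw [Matrix.one_apply_ne (by simpa using hgh)]
        linear_combination hc - addself (γ₂ * γ₄)
  have hX2 : A * B + B * A = 0 := by
    rw [← Matrix.ext_iff]
    intro i j
    rw [Matrix.add_apply, Matrix.mul_apply, Matrix.mul_apply]
    rcases i with _ | g <;> rcases j with _ | h <;>
      simp only [Fintype.sum_option, hA, hB, Matrix.of_apply, sigmaMat, Matrix.zero_apply]
    · rw [hcard, hcard]
      linear_combination addself (γ₁ * γ₃) + addself (γ₂ * γ₄)
    · rw [← Finset.mul_sum, ← Finset.mul_sum, sum_shiftR, sum_shiftR, ← h5, ← h5']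
      linear_combination addself (γ₁ * γ₄) + addself (γ₂ * γ₃)
    · rw [← Finset.sum_mul, ← Finset.sum_mul, sum_shiftL, sum_shiftL, ← h5, ← h5']
      linear_combination addself (γ₂ * γ₃) + addself (γ₄ * γ₁)
    · rw [E3, E3]
      have hc : (v₁ * v₂).coeff (g⁻¹ * h) = (v₂ * v₁).coeff (g⁻¹ * h) := by rw [h1]
      linear_combination hc + addself ((v₂ * v₁).coeff (g⁻¹ * h)) + addself (γ₂ * γ₄)
  have hX4 : Bᵀ * B + Aᵀ * A = 1 := by
    rw [← Matrix.ext_iff]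
    intro i j
    rw [Matrix.add_apply, Matrix.mul_apply, Matrix.mul_apply]
    rcases i with _ | g <;> rcases j with _ | h <;>
      simp only [Fintype.sum_option, Matrix.transpose_apply, hA, hB, Matrix.of_apply, sigmaMat]
    · rw [hcard, hcard, Matrix.one_apply_eq]
      linear_combination h2
    · rw [← Finset.mul_sum, ← Finset.mul_sum, sum_shiftR, sum_shiftR, ← h5, ← h5',
        Matrix.one_apply_ne (by simp)]
      linear_combination addself (γ₃ * γ₄) + addself (γ₁ * γ₂)
    · rw [← Finset.sum_mul, ← Finset.sum_mul, sum_shiftR, sum_shiftR, ← h5, ← h5',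
        Matrix.one_apply_ne (by simp)]
      linear_combination addself (γ₄ * γ₃) + addself (γ₂ * γ₁)
    · rw [E2, E2]
      by_cases hgh : g = h
      · subst hgh
        have hc := hcoeff4 1
        rw [if_pos rfl] at hc
        simp only [inv_mul_cancel, Matrix.one_apply_eq]
        linear_combination hc - addself (γ₂ * γ₄ + 1)
      · have hc := hcoeff4 (g⁻¹ * h)
        rw [if_neg (by simp [eq_comm, inv_mul_eq_one, hgh])] at hc
        rw [Matrix.one_apply_ne (by simpa using hgh)]
        linear_combination hc - addself (γ₂ * γ₄)
  have hX3 : Bᵀ * Aᵀ + Aᵀ * Bᵀ = 0 := by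
    rw [← Matrix.transpose_mul, ← Matrix.transpose_mul, ← Matrix.transpose_add, hX2,
      Matrix.transpose_zero]
  have hMMT : M * Mᵀ = 1 := by
    rw [hM, Matrix.fromBlocks_transpose, Matrix.transpose_transpose, Matrix.transpose_transpose,
      Matrix.fromBlocks_multiply, hX1, hX2, hX3, hX4, Matrix.fromBlocks_one]
  have hMTM : Mᵀ * M = 1 := mul_eq_one_comm.mp hMMT
  have hgg : ∀ a b, ∑ j, gen a j * gen b j = 0 := by
    intro a b
    rw [hgen]
    rw [Fintype.sum_sum_type]
    simp only [Sum.elim_inl, Sum.elim_inr]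
    have e1 : ∑ j, (if a = j then (1 : DualNumber (ZMod 2)) else 0) * (if b = j then 1 else 0)
        = if b = a then 1 else 0 := by
      simp only [ite_mul, one_mul, zero_mul, Finset.sum_ite_eq, Finset.mem_univ, if_true]
    have e2 : ∑ j, M a j * M b j = if a = b then 1 else 0 := by
      have hh := congrFun (congrFun hMMT a) b
      simpa [Matrix.mul_apply, Matrix.transpose_apply, Matrix.one_apply] using hh
    rw [e1, e2]
    by_cases hab : a = b
    · subst hab; simp [addself]
    · simp [hab, Ne.symm hab]
  apply le_antisymm
  · rw [hC]
    apply Submodule.span_le.mpr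
    rintro _ ⟨a, rfl⟩
    rw [SetLike.mem_coe, mem_dualCode]
    intro v hv
    induction hv using Submodule.span_induction with
    | mem x hx => obtain ⟨b, rfl⟩ := hx; exact hgg b a
    | zero => simp
    | add x y hx hy px py =>
        simp only [Pi.add_apply, add_mul, Finset.sum_add_distrib, px, py, add_zero]
    | smul c x hx px =>
        have e : ∑ i, (c • x) i * gen a i = c * ∑ i, x i * gen a i := by
          rw [Finset.mul_sum]
          exact Finset.sum_congr rfl fun i _ => by simp [mul_assoc]
        rw [e, px, mul_zero]
  · intro w hw
    have hw' : ∀ i, ∑ j, gen i j * w j = 0 := fun i =>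
      hw (gen i) (by rw [hC]; exact Submodule.subset_span ⟨i, rfl⟩)
    have hrel : ∀ i, w (Sum.inl i) = ∑ j, M i j * w (Sum.inr j) := by
      intro i
      have h := hw' i
      rw [hgen, Fintype.sum_sum_type] at h
      simp only [Sum.elim_inl, Sum.elim_inr, ite_mul, one_mul, zero_mul,
        Finset.sum_ite_eq, Finset.mem_univ, if_true] at h
      exact eq_of_addzero h
    rw [hC]
    have hrepr : w = ∑ i, w (Sum.inl i) • gen i := by
      funext j
      rw [Finset.sum_apply]
      rcases j with j | j
      · simp only [Pi.smul_apply, hgen, Sum.elim_inl, smul_eq_mul, mul_ite, mul_one, mul_zero,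
          Finset.sum_ite_eq', Finset.mem_univ, if_true]
      · simp only [Pi.smul_apply, hgen, Sum.elim_inr, smul_eq_mul]
        rw [Finset.sum_congr rfl fun i _ => by rw [hrel i]]
        simp only [Finset.sum_mul]
        rw [Finset.sum_comm]
        have key : ∀ k, ∑ i, M i k * w (Sum.inr k) * M i j
            = (Mᵀ * M) j k * w (Sum.inr k) := by
          intro k
          rw [Matrix.mul_apply, Finset.sum_mul]
          exact Finset.sum_congr rfl fun i _ => by rw [Matrix.transpose_apply]; ring
        rw [Finset.sum_congr rfl fun k _ => key k, hMTM]
        simp [Matrix.one_apply]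
    rw [hrepr]
    exact Submodule.sum_mem _ fun i _ =>
      Submodule.smul_mem _ _ (Submodule.subset_span ⟨i, rfl⟩)
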